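/- For all integers n ≥ 2 and 0 ≤ k ≤ n−2, (n² − k²)·C_k^n = −k²·C_k^{n−2}; moreover C_{n−1}^n = 0 for every n ≥ 1. -/

import Mathlib

open Nat in
/-- `C_k^n = cos((n−k)π/2) kⁿ / ((n−k)‼ (n+k)‼)` for `0 ≤ k ≤ n`. -/
noncomputable def Ccoef (n k : ℕ) : ℝ :=
  Real.cos (((n - k : ℕ) : ℝ) * Real.pi / 2) * (k : ℝ) ^ n /
    (((n - k)‼ : ℝ) * ((n + k)‼ : ℝ))

open Nat in
/-- Passing from `m` to `m + 2` flips the sign of the cosine and multiplies the denominator by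
`(m + 2 - k) (m + 2 + k) = (m + 2)² - k²`. -/
theorem Ccoef_add_two {m k : ℕ} (hk : k ≤ m) :
    (((m + 2 : ℕ) : ℝ) ^ 2 - (k : ℝ) ^ 2) * Ccoef (m + 2) k = -(k : ℝ) ^ 2 * Ccoef m k := by
  have hsub : m + 2 - k = (m - k) + 2 := by omega
  have hadd : m + 2 + k = (m + k) + 2 := by omega
  have hcos : Real.cos ((((m - k) + 2 : ℕ) : ℝ) * Real.pi / 2) =
      -Real.cos (((m - k : ℕ) : ℝ) * Real.pi / 2) := by
    rw [← Real.cos_add_pi]; push_cast; ring_nf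
  have hsq : ((m + 2 : ℕ) : ℝ) ^ 2 - (k : ℝ) ^ 2 =
      (((m - k : ℕ) : ℝ) + 2) * (((m + k : ℕ) : ℝ) + 2) := by
    push_cast [Nat.cast_sub hk]; ring
  have hd₁ : ((m - k)‼ : ℝ) ≠ 0 := by positivity
  have hd₂ : ((m + k)‼ : ℝ) ≠ 0 := by positivity
  unfold Ccoef
  rw [hsq, hsub, hadd, hcos, Nat.doubleFactorial_add_two, Nat.doubleFactorial_add_two]
  push_cast
  field_simp
  ring

theorem Ccoef_eq_zero_of_odd {n k : ℕ} (h : Odd (n - k)) : Ccoef n k = 0 := by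
  obtain ⟨j, hj⟩ := h
  rw [Ccoef, hj, Real.cos_eq_zero_iff.mpr ⟨j, by push_cast; ring⟩, zero_mul, zero_div]

theorem C_recurrence :
    (∀ n : ℕ, 2 ≤ n → ∀ k : ℕ, k ≤ n - 2 →
      ((n : ℝ) ^ 2 - (k : ℝ) ^ 2) * Ccoef n k = -(k : ℝ) ^ 2 * Ccoef (n - 2) k) ∧
    (∀ n : ℕ, 1 ≤ n → Ccoef n (n - 1) = 0) := by
  refine ⟨fun n hn k hk => ?_, fun n hn => Ccoef_eq_zero_of_odd ?_⟩
  · obtain ⟨m, rfl⟩ : ∃ m, n = m + 2 := ⟨n - 2, by omega⟩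
    simpa using Ccoef_add_two (m := m) (by omega)
  · rw [show n - (n - 1) = 1 by omega]
    exact odd_one
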